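/- For n ≥ 6, in the spined cube SQ_n the induced subgraph on the set of vertices x_1⋯x_n with x_{n-1} = x_n = 0 is isomorphic to the (n-2)-dimensional hypercube Q_{n-2}. -/

import Mathlib

/-!
The twisting terms of the spined-cube neighbour rules are all multiples of `x_{n-1}` or `x_n`,
so on the face `x_{n-1} = x_n = 0` every rule just flips one bit. On that face `SQ_n` therefore
agrees with `Q_n`, and the face of `Q_n` on which the last two coordinates vanish is `Q_{n-2}`,
because restricting to the first `n - 2` coordinates preserves Hamming distance there.
-/

/-- The "difference vector" of the neighbor rules of the spined cube, `i` being the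
0-based index of the flipped bit. -/
def sqDelta (n : ℕ) (x : Fin n → ZMod 2) (i : Fin n) : Fin n → ZMod 2 :=
  fun j =>
    (if j = i then 1 else 0) +
    (if i.val + 5 ≤ n then
      (if j.val = i.val + 1 then x ⟨n - 2, by have := i.isLt; omega⟩ else 0) +
      (if j.val = i.val + 2 then x ⟨n - 1, by have := i.isLt; omega⟩ else 0)
    else if n ≤ i.val + 2 then 0
    else (if j.val = i.val + 1 then x ⟨n - 1, by have := i.isLt; omega⟩ else 0))

/-- The `n`-dimensional spined cube `SQ_n`. -/
def spinedCube (n : ℕ) : SimpleGraph (Fin n → ZMod 2) :=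
  SimpleGraph.fromRel (fun x y => ∃ i : Fin n, y = x + sqDelta n x i)

/-- The `m`-dimensional hypercube. -/
def hypercube (m : ℕ) : SimpleGraph (Fin m → ZMod 2) :=
  SimpleGraph.fromRel (fun x y => (Finset.univ.filter (fun i => x i ≠ y i)).card = 1)

open Function

theorem hammingDist_comp_of_eqOn_compl_range {ι κ β : Type*} [Fintype ι] [Fintype κ]
    [DecidableEq β] {f : ι → κ} (hf : Injective f) {x y : κ → β}
    (hxy : ∀ j ∉ Set.range f, x j = y j) :
    hammingDist (x ∘ f) (y ∘ f) = hammingDist x y := by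
  unfold hammingDist
  rw [← Finset.card_map ⟨f, hf⟩]
  congr 1
  ext j
  simp only [Finset.mem_map, Finset.mem_filter, Finset.mem_univ, true_and, comp_apply,
    Embedding.coeFn_mk]
  constructor
  · rintro ⟨i, hi, rfl⟩
    exact hi
  · intro hj
    obtain ⟨i, rfl⟩ : j ∈ Set.range f := by_contra fun h => hj (hxy j h)
    exact ⟨i, hj, rfl⟩

theorem hammingDist_eq_one_iff_exists_eq_add_single {ι : Type*} [Fintype ι] [DecidableEq ι]
    {x y : ι → ZMod 2} : hammingDist x y = 1 ↔ ∃ i, y = x + Pi.single i 1 := by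
  have hZ : ∀ a b : ZMod 2, a ≠ b ↔ b = a + 1 := by decide
  simp only [hammingDist, Finset.card_eq_one, Finset.ext_iff, Finset.mem_filter,
    Finset.mem_univ, true_and, Finset.mem_singleton, funext_iff, Pi.add_apply]
  refine exists_congr fun i => forall_congr' fun j => ?_
  rcases eq_or_ne j i with rfl | hji
  · simp [hZ]
  · simp [hji, eq_comm]

theorem hypercube_adj_iff {m : ℕ} {x y : Fin m → ZMod 2} :
    (hypercube m).Adj x y ↔ hammingDist x y = 1 := by
  rw [hypercube, SimpleGraph.fromRel_adj]
  change _ ∧ (hammingDist x y = 1 ∨ hammingDist y x = 1) ↔ _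
  rw [hammingDist_comm y x, or_self, and_iff_right_iff_imp]
  intro h
  exact hammingDist_ne_zero.mp (by omega)

def subcube (n m : ℕ) : Set (Fin n → ZMod 2) := {x | ∀ j : Fin n, m ≤ (j : ℕ) → x j = 0}

theorem sqDelta_eq_single {n : ℕ} {x : Fin n → ZMod 2} (hx : x ∈ subcube n (n - 2))
    (i : Fin n) : sqDelta n x i = Pi.single i 1 := by
  have := i.isLt
  have h2 : x ⟨n - 2, by omega⟩ = 0 := hx _ le_rfl
  have h1 : x ⟨n - 1, by omega⟩ = 0 := hx _ (by simp only; omega)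
  funext j
  simp [sqDelta, Pi.single_apply, h1, h2]

theorem spinedCube_adj_iff_of_mem_subcube {n : ℕ} {x y : Fin n → ZMod 2}
    (hx : x ∈ subcube n (n - 2)) (hy : y ∈ subcube n (n - 2)) :
    (spinedCube n).Adj x y ↔ (hypercube n).Adj x y := by
  simp only [spinedCube, hypercube, SimpleGraph.fromRel_adj, sqDelta_eq_single hx,
    sqDelta_eq_single hy, ← hammingDist_eq_one_iff_exists_eq_add_single]
  exact Iff.rfl

theorem spinedCube_induce_subcube (n : ℕ) :
    (spinedCube n).induce (subcube n (n - 2)) = (hypercube n).induce (subcube n (n - 2)) := by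
  ext x y
  exact spinedCube_adj_iff_of_mem_subcube x.2 y.2

def inducedSubcubeIsoHypercube {n m : ℕ} (h : m ≤ n) :
    (hypercube n).induce (subcube n m) ≃g hypercube m where
  toFun x := x.1 ∘ Fin.castLE h
  invFun u := ⟨fun j => if hj : (j : ℕ) < m then u ⟨j, hj⟩ else 0,
    fun j hj => dif_neg (by omega)⟩
  left_inv x := by
    ext j
    by_cases hj : (j : ℕ) < m
    · simp [hj]
    · simp [hj, x.2 j (by omega)]
  right_inv u := by
    ext j
    simp
  map_rel_iff' {x y} := by
    change (hypercube m).Adj (x.1 ∘ _) (y.1 ∘ _) ↔ (hypercube n).Adj x.1 y.1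
    rw [hypercube_adj_iff, hypercube_adj_iff,
      hammingDist_comp_of_eqOn_compl_range (Fin.castLE_injective h)]
    intro j hj
    have hmj : m ≤ (j : ℕ) := by
      by_contra hjm
      exact hj ⟨⟨j, by omega⟩, rfl⟩
    rw [x.2 j hmj, y.2 j hmj]

/-- For `n ≥ 6`, the subgraph of `SQ_n` induced on the vertices with
`x_{n-1} = x_n = 0` is isomorphic to the hypercube `Q_{n-2}`. -/
theorem spinedCube_induce_iso_hypercube (n : ℕ) (hn : 6 ≤ n) :
    Nonempty
      (((spinedCube n).induce
          {x : Fin n → ZMod 2 | x ⟨n - 2, by omega⟩ = 0 ∧ x ⟨n - 1, by omega⟩ = 0}) ≃g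
        hypercube (n - 2)) := by
  have hface : {x : Fin n → ZMod 2 | x ⟨n - 2, by omega⟩ = 0 ∧ x ⟨n - 1, by omega⟩ = 0} =
      subcube n (n - 2) := by
    ext x
    refine ⟨fun ⟨h2, h1⟩ j hj => ?_, fun hx => ⟨hx _ le_rfl, hx _ (by simp only; omega)⟩⟩
    rcases (by omega : (j : ℕ) = n - 2 ∨ (j : ℕ) = n - 1) with hj | hj
    · rwa [show j = ⟨n - 2, by omega⟩ from Fin.ext hj]
    · rwa [show j = ⟨n - 1, by omega⟩ from Fin.ext hj]
  rw [hface, spinedCube_induce_subcube]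
  exact ⟨inducedSubcubeIsoHypercube (Nat.sub_le n 2)⟩
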